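/- arXiv:1704.08900 — 4 statements merged into one kernel-verified Lean document; each statement's English description precedes it below -/
import Mathlib

section
/- Let μ be a Radon measure on ℝ^{n+1}. Then μ has bounded area ratios, i.e. there exists C < ∞ such that μ(B_R(x)) ≤ C·Rⁿ for every x ∈ ℝ^{n+1} and every R > 0, if and only if μ has finite entropy, i.e. λ(μ) = sup_{y ∈ ℝ^{n+1}, t > 0} ∫ (4πt)^{-n/2} exp(-|x − y|²/(4t)) dμ(x) < ∞. -/
open MeasureTheory Metric Set
open scoped ENNReal

/-- The entropy of a measure `μ` on `ℝ^{n+1}`: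
`λ(μ) = sup_{y, t > 0} ∫ (4πt)^{-n/2} exp(-|x - y|²/(4t)) dμ(x)`. -/
noncomputable def measureEntropy (n : ℕ) (μ : Measure (EuclideanSpace ℝ (Fin (n+1)))) :
    ℝ≥0∞ :=
  ⨆ (y : EuclideanSpace ℝ (Fin (n+1))) (t : ℝ) (_ : 0 < t),
    ∫⁻ x, ENNReal.ofReal
      ((4 * Real.pi * t) ^ (-(n : ℝ) / 2) * Real.exp (-‖x - y‖ ^ 2 / (4 * t))) ∂μ

private lemma exp_neg_le_factorial_div (m : ℕ) (x : ℝ) (hx : 0 < x) :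
    Real.exp (-x) ≤ m.factorial / x ^ m := by
  have h1 : x ^ m / m.factorial ≤ Real.exp x := by
    refine le_trans ?_ (Real.sum_le_exp_of_nonneg hx.le (m+1))
    have he : x ^ m / (m.factorial : ℝ)
        = ∑ i ∈ Finset.range (m+1), if i = m then x ^ i / i.factorial else 0 := by simp
    rw [he]
    apply Finset.sum_le_sum
    intro i _
    split_ifs with h
    · exact le_rfl
    · positivity
  have h2 : 0 < x ^ m / m.factorial := by positivity
  rw [Real.exp_neg]
  calc (Real.exp x)⁻¹ ≤ (x ^ m / m.factorial)⁻¹ := inv_anti₀ h2 h1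
    _ = m.factorial / x ^ m := by rw [inv_div]

/-- the decay sequence: `u 0 = 1`, `u (k+1) = exp(-4^k/4)` -/
private noncomputable def uSeq : ℕ → ℝ
  | 0 => 1
  | (k+1) => Real.exp (-(4 ^ k / 4))

private lemma uSeq_nonneg (k : ℕ) : 0 ≤ uSeq k := by
  cases k with
  | zero => norm_num [uSeq]
  | succ m => exact (Real.exp_pos _).le

/-- weight sequence `w k = u k * 2^(k*n)` -/
private noncomputable def wSeq (n : ℕ) (k : ℕ) : ℝ := uSeq k * 2 ^ (k * n)

private lemma wSeq_nonneg (n k : ℕ) : 0 ≤ wSeq n k :=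
  mul_nonneg (uSeq_nonneg k) (by positivity)

private lemma wSeq_summable (n : ℕ) : Summable (wSeq n) := by
  rw [← summable_nat_add_iff 1]
  set m := n + 1
  have hq : (0:ℝ) ≤ (2:ℝ) ^ n / 4 ^ m := by positivity
  have hq1 : (2:ℝ) ^ n / 4 ^ m < 1 := by
    rw [div_lt_one (by positivity)]
    calc (2:ℝ) ^ n < 2 ^ (2*m) := by
          apply pow_lt_pow_right₀ one_lt_two
          omega
      _ = 4 ^ m := by
          rw [pow_mul]; norm_num
  have hgeom : Summable (fun k : ℕ => ((m.factorial : ℝ) * 4 ^ m * 2 ^ n) * ((2:ℝ) ^ n / 4 ^ m) ^ k) :=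
    (summable_geometric_of_lt_one hq hq1).mul_left _
  apply Summable.of_nonneg_of_le (fun k => wSeq_nonneg n _) _ hgeom
  intro k
  have hx : (0:ℝ) < 4 ^ k / 4 := by positivity
  have hexp := exp_neg_le_factorial_div m _ hx
  have h4 : ((4:ℝ) ^ k / 4) ^ m = 4 ^ (k*m) / 4 ^ m := by
    rw [div_pow, ← pow_mul]
  rw [h4] at hexp
  have hwk : wSeq n (k+1) = Real.exp (-(4 ^ k / 4)) * 2 ^ ((k+1) * n) := rfl
  rw [hwk]
  have h2pow : (2:ℝ) ^ ((k+1)*n) = 2 ^ (k*n) * 2 ^ n := by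
    rw [← pow_add]; ring_nf
  calc Real.exp (-(4 ^ k / 4)) * 2 ^ ((k+1) * n)
      ≤ (m.factorial / (4 ^ (k*m) / 4 ^ m)) * 2 ^ ((k+1)*n) := by
        apply mul_le_mul_of_nonneg_right hexp (by positivity)
    _ = (m.factorial : ℝ) * 4 ^ m * 2 ^ n * ((2:ℝ) ^ n / 4 ^ m) ^ k := by
        rw [h2pow, div_pow, ← pow_mul, ← pow_mul]
        field_simp
        ring

private lemma key_estimate (n : ℕ) (μ : Measure (EuclideanSpace ℝ (Fin (n+1)))) (C : ℝ)
    (hC0 : 0 ≤ C)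
    (hC : ∀ x R, 0 < R → μ (ball x R) ≤ ENNReal.ofReal (C * R ^ n))
    (y : EuclideanSpace ℝ (Fin (n+1))) (t : ℝ) (ht : 0 < t) :
    ∫⁻ x, ENNReal.ofReal
      ((4 * Real.pi * t) ^ (-(n : ℝ) / 2) * Real.exp (-‖x - y‖ ^ 2 / (4 * t))) ∂μ
      ≤ ENNReal.ofReal ((4 * Real.pi) ^ (-(n:ℝ)/2) * C * ∑' k, wSeq n k) := by
  have hπ : (0:ℝ) < 4 * Real.pi := by positivity
  have hπt : (0:ℝ) < 4 * Real.pi * t := by positivity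
  set a : ℝ := (4 * Real.pi * t) ^ (-(n : ℝ) / 2) with ha
  have ha0 : 0 < a := Real.rpow_pos_of_pos hπt _
  set A : ℝ := (4 * Real.pi) ^ (-(n:ℝ)/2) with hA
  have hA0 : 0 < A := Real.rpow_pos_of_pos hπ _
  have hst : (0:ℝ) < Real.sqrt t := Real.sqrt_pos.2 ht
  set r : ℕ → ℝ := fun k => Real.sqrt t * 2 ^ k with hr
  have hr0 : ∀ k, 0 < r k := fun k => by positivity
  set s : ℕ → Set (EuclideanSpace ℝ (Fin (n+1))) := fun k =>
    Nat.casesOn k (ball y (r 0)) (fun m => ball y (r (m+1)) \ ball y (r m)) with hs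
  have hcover : (⋃ k, s k) = univ := by
    rw [eq_univ_iff_forall]
    intro x
    obtain ⟨k, hk⟩ := pow_unbounded_of_one_lt (dist x y / Real.sqrt t) (one_lt_two (α := ℝ))
    have hxk : x ∈ ball y (r k) := by
      rw [mem_ball]
      show dist x y < Real.sqrt t * 2 ^ k
      rw [div_lt_iff₀ hst] at hk
      linarith
    clear hk
    induction k with
    | zero => exact mem_iUnion.2 ⟨0, hxk⟩
    | succ m ih =>
        by_cases hm : x ∈ ball y (r m)
        · exact ih hm
        · exact mem_iUnion.2 ⟨m+1, ⟨hxk, hm⟩⟩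
  have hpt : ∀ k, ∀ x ∈ s k,
      ENNReal.ofReal (a * Real.exp (-‖x - y‖ ^ 2 / (4 * t))) ≤ ENNReal.ofReal (a * uSeq k) := by
    intro k x hx
    apply ENNReal.ofReal_le_ofReal
    apply mul_le_mul_of_nonneg_left _ ha0.le
    cases k with
    | zero =>
        have : -‖x - y‖ ^ 2 / (4 * t) ≤ 0 :=
          div_nonpos_of_nonpos_of_nonneg (neg_nonpos.2 (by positivity)) (by positivity)
        calc Real.exp _ ≤ Real.exp 0 := Real.exp_le_exp.2 this
          _ = uSeq 0 := by simp [uSeq]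
    | succ m =>
        have hge : r m ≤ ‖x - y‖ := by
          have h2 := hx.2
          rw [mem_ball, dist_eq_norm] at h2
          linarith [not_lt.1 h2]
        have h4m : ((2:ℝ) ^ m) ^ 2 = 4 ^ m := by
          rw [← pow_mul, mul_comm, pow_mul]; norm_num
        have hsq : t * 4 ^ m ≤ ‖x - y‖ ^ 2 := by
          have h1 : (r m) ^ 2 ≤ ‖x - y‖ ^ 2 := pow_le_pow_left₀ (hr0 m).le hge 2
          calc t * 4 ^ m = (Real.sqrt t * 2 ^ m) ^ 2 := by
                rw [mul_pow, Real.sq_sqrt ht.le, h4m]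
            _ ≤ _ := h1
        apply Real.exp_le_exp.2
        show -‖x - y‖ ^ 2 / (4 * t) ≤ -(4 ^ m / 4)
        rw [div_le_iff₀ (by positivity : (0:ℝ) < 4 * t)]
        nlinarith [hsq]
  have hms : ∀ k, μ (s k) ≤ ENNReal.ofReal (C * (r k) ^ n) := by
    intro k
    cases k with
    | zero => exact hC y (r 0) (hr0 0)
    | succ m =>
        calc μ (s (m+1)) ≤ μ (ball y (r (m+1))) := measure_mono diff_subset
          _ ≤ _ := hC y (r (m+1)) (hr0 (m+1))
  have hterm : ∀ k, (∫⁻ x in s k, ENNReal.ofReal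
      (a * Real.exp (-‖x - y‖ ^ 2 / (4 * t))) ∂μ)
      ≤ ENNReal.ofReal (A * C * wSeq n k) := by
    intro k
    calc (∫⁻ x in s k, ENNReal.ofReal (a * Real.exp (-‖x - y‖ ^ 2 / (4 * t))) ∂μ)
        ≤ ∫⁻ _ in s k, ENNReal.ofReal (a * uSeq k) ∂μ :=
          setLIntegral_mono measurable_const (hpt k)
      _ = ENNReal.ofReal (a * uSeq k) * μ (s k) := setLIntegral_const _ _
      _ ≤ ENNReal.ofReal (a * uSeq k) * ENNReal.ofReal (C * (r k) ^ n) :=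
          mul_le_mul_right (hms k) _
      _ = ENNReal.ofReal (a * uSeq k * (C * (r k) ^ n)) :=
          (ENNReal.ofReal_mul (mul_nonneg ha0.le (uSeq_nonneg k))).symm
      _ = ENNReal.ofReal (A * C * wSeq n k) := by
          congr 1
          have key : a * (Real.sqrt t * 2^k) ^ n = A * 2 ^ (k*n) := by
            have h1 : (Real.sqrt t * 2^k : ℝ) ^ n = t ^ ((n:ℝ)/2) * 2 ^ (k*n) := by
              rw [mul_pow, ← pow_mul]
              congr 1
              rw [Real.sqrt_eq_rpow, ← Real.rpow_natCast (t ^ (1/2:ℝ)) n,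
                ← Real.rpow_mul ht.le]
              congr 1
              ring
            have h2 : a = A * t ^ (-(n:ℝ)/2) := by
              rw [ha, hA, ← Real.mul_rpow hπ.le ht.le]
            rw [h1, h2]
            have h3 : t ^ (-(n:ℝ)/2) * t ^ ((n:ℝ)/2) = 1 := by
              rw [← Real.rpow_add ht, show -(n:ℝ)/2 + (n:ℝ)/2 = 0 by ring, Real.rpow_zero]
            calc A * t ^ (-(n:ℝ)/2) * (t ^ ((n:ℝ)/2) * 2 ^ (k*n))
                = A * (t ^ (-(n:ℝ)/2) * t ^ ((n:ℝ)/2)) * 2 ^ (k*n) := by ring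
              _ = A * 2 ^ (k*n) := by rw [h3, mul_one]
          have hrk : r k = Real.sqrt t * 2 ^ k := rfl
          rw [wSeq, hrk]
          calc a * uSeq k * (C * (Real.sqrt t * 2^k) ^ n)
              = (a * (Real.sqrt t * 2^k) ^ n) * (C * uSeq k) := by ring
            _ = A * 2 ^ (k*n) * (C * uSeq k) := by rw [key]
            _ = A * C * (uSeq k * 2 ^ (k*n)) := by ring
  calc ∫⁻ x, ENNReal.ofReal (a * Real.exp (-‖x - y‖ ^ 2 / (4 * t))) ∂μ
      = ∫⁻ x in ⋃ k, s k, ENNReal.ofReal (a * Real.exp (-‖x - y‖ ^ 2 / (4 * t))) ∂μ := by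
        rw [hcover, setLIntegral_univ]
    _ ≤ ∑' k, ∫⁻ x in s k, ENNReal.ofReal (a * Real.exp (-‖x - y‖ ^ 2 / (4 * t))) ∂μ :=
        lintegral_iUnion_le _ _
    _ ≤ ∑' k, ENNReal.ofReal (A * C * wSeq n k) := ENNReal.tsum_le_tsum hterm
    _ = ENNReal.ofReal (∑' k, A * C * wSeq n k) := by
        rw [ENNReal.ofReal_tsum_of_nonneg]
        · intro k
          exact mul_nonneg (mul_nonneg hA0.le hC0) (wSeq_nonneg n k)
        · exact (wSeq_summable n).mul_left _
    _ = ENNReal.ofReal (A * C * ∑' k, wSeq n k) := by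
        rw [tsum_mul_left]
  

/-- A Radon measure on `ℝ^{n+1}` has bounded area ratios if and only if it has
finite entropy. -/
theorem boundedAreaRatios_iff_finiteEntropy (n : ℕ)
    (μ : Measure (EuclideanSpace ℝ (Fin (n+1)))) [IsLocallyFiniteMeasure μ] :
    (∃ C : ℝ, ∀ (x : EuclideanSpace ℝ (Fin (n+1))) (R : ℝ), 0 < R →
        μ (ball x R) ≤ ENNReal.ofReal (C * R ^ n)) ↔
      measureEntropy n μ < ∞ := by
  constructor
  · rintro ⟨C, hC⟩
    have hC' : ∀ x R, 0 < R → μ (ball x R) ≤ ENNReal.ofReal (max C 0 * R ^ n) := by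
      intro x R hR
      refine (hC x R hR).trans (ENNReal.ofReal_le_ofReal ?_)
      apply mul_le_mul_of_nonneg_right (le_max_left _ _) (by positivity)
    have : measureEntropy n μ
        ≤ ENNReal.ofReal ((4 * Real.pi) ^ (-(n:ℝ)/2) * max C 0 * ∑' k, wSeq n k) := by
      apply iSup_le; intro y
      apply iSup_le; intro t
      apply iSup_le; intro ht
      exact key_estimate n μ (max C 0) (le_max_right _ _) hC' y t ht
    exact lt_of_le_of_lt this ENNReal.ofReal_lt_top
  · intro h
    set L : ℝ := (measureEntropy n μ).toReal with hL
    refine ⟨L * Real.exp (1/4 : ℝ) * (4 * Real.pi) ^ ((n:ℝ)/2), ?_⟩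
    intro x R hR
    have hπ : (0:ℝ) < 4 * Real.pi := by positivity
    have ht : (0:ℝ) < R ^ 2 := by positivity
    have hπt : (0:ℝ) < 4 * Real.pi * R ^ 2 := by positivity
    set a : ℝ := (4 * Real.pi * R ^ 2) ^ (-(n : ℝ) / 2) with ha
    have ha0 : 0 < a := Real.rpow_pos_of_pos hπt _
    have hc0 : 0 < a * Real.exp (-(1/4 : ℝ)) := by positivity
    -- lower bound the integral at (x, R^2)
    have hlow : ENNReal.ofReal (a * Real.exp (-(1/4:ℝ))) * μ (ball x R)
        ≤ measureEntropy n μ := by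
      have h1 : ENNReal.ofReal (a * Real.exp (-(1/4:ℝ))) * μ (ball x R)
          ≤ ∫⁻ z, ENNReal.ofReal
            ((4 * Real.pi * R ^ 2) ^ (-(n : ℝ) / 2)
              * Real.exp (-‖z - x‖ ^ 2 / (4 * R ^ 2))) ∂μ := by
        calc ENNReal.ofReal (a * Real.exp (-(1/4:ℝ))) * μ (ball x R)
            = ∫⁻ _ in ball x R, ENNReal.ofReal (a * Real.exp (-(1/4:ℝ))) ∂μ :=
              (setLIntegral_const _ _).symm
          _ ≤ ∫⁻ z in ball x R, ENNReal.ofReal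
              (a * Real.exp (-‖z - x‖ ^ 2 / (4 * R ^ 2))) ∂μ := by
              apply setLIntegral_mono
              · fun_prop
              · intro z hz
                apply ENNReal.ofReal_le_ofReal
                apply mul_le_mul_of_nonneg_left _ ha0.le
                apply Real.exp_le_exp.2
                rw [mem_ball, dist_eq_norm] at hz
                have hz2 : ‖z - x‖ ^ 2 < R ^ 2 := by
                  apply pow_lt_pow_left₀ hz (norm_nonneg _)
                  norm_num
                rw [neg_div, neg_le_neg_iff, div_le_iff₀ (by positivity : (0:ℝ) < 4 * R^2)]
                nlinarith
          _ ≤ ∫⁻ z, ENNReal.ofReal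
              (a * Real.exp (-‖z - x‖ ^ 2 / (4 * R ^ 2))) ∂μ :=
              setLIntegral_le_lintegral _ _
      refine h1.trans ?_
      refine le_iSup_of_le x ?_
      refine le_iSup_of_le (R ^ 2) ?_
      exact le_iSup_of_le ht le_rfl
    rw [← ENNReal.ofReal_toReal h.ne, ← hL] at hlow
    have hμle : μ (ball x R) ≤ ENNReal.ofReal L / ENNReal.ofReal (a * Real.exp (-(1/4:ℝ))) := by
      rw [ENNReal.le_div_iff_mul_le (Or.inl (ENNReal.ofReal_pos.2 hc0).ne')
        (Or.inl ENNReal.ofReal_ne_top)]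
      rw [mul_comm]
      exact hlow
    refine hμle.trans ?_
    rw [← ENNReal.ofReal_div_of_pos hc0]
    apply ENNReal.ofReal_le_ofReal
    have hainv : a⁻¹ = (4 * Real.pi) ^ ((n:ℝ)/2) * R ^ n := by
      rw [ha, neg_div, Real.rpow_neg hπt.le, inv_inv,
        Real.mul_rpow hπ.le ht.le]
      congr 1
      rw [← Real.rpow_natCast R n, ← Real.rpow_natCast R 2, ← Real.rpow_mul hR.le]
      congr 1
      push_cast
      ring
    have hLnn : 0 ≤ L := ENNReal.toReal_nonneg
    rw [div_eq_mul_inv, mul_inv, hainv, Real.exp_neg, inv_inv]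
    apply le_of_eq
    ring
end

section
/- The entropy is lower semi-continuous with respect to weak convergence of measures: if (μᵢ) is a sequence of finite Borel measures on ℝ^{n+1} converging weakly to a finite Borel measure μ (i.e. ∫ f dμᵢ → ∫ f dμ for every bounded continuous f : ℝ^{n+1} → ℝ), then λ(μ) ≤ liminf_{i→∞} λ(μᵢ). -/
open MeasureTheory Metric Set
open scoped ENNReal BoundedContinuousFunction

noncomputable def entropyKernel (n : ℕ) (y : EuclideanSpace ℝ (Fin (n+1))) (t : ℝ)
    (ht : 0 < t) : EuclideanSpace ℝ (Fin (n+1)) →ᵇ ℝ :=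
  BoundedContinuousFunction.ofNormedAddCommGroup
    (fun x => (4 * Real.pi * t) ^ (-(n : ℝ) / 2) * Real.exp (-‖x - y‖ ^ 2 / (4 * t)))
    (by fun_prop)
    (|(4 * Real.pi * t) ^ (-(n : ℝ) / 2)|)
    (by
      intro x
      rw [Real.norm_eq_abs, abs_mul]
      have h1 : |Real.exp (-‖x - y‖ ^ 2 / (4 * t))| ≤ 1 := by
        rw [abs_of_pos (Real.exp_pos _)]
        apply Real.exp_le_one_iff.mpr
        apply div_nonpos_of_nonpos_of_nonneg
        · simpa using sq_nonneg ‖x - y‖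
        · linarith
      nlinarith [abs_nonneg ((4 * Real.pi * t) ^ (-(n : ℝ) / 2)),
        abs_nonneg (Real.exp (-‖x - y‖ ^ 2 / (4 * t)))])

/-- Entropy is lower semi-continuous with respect to weak convergence of finite
Borel measures. -/
theorem measureEntropy_le_liminf (n : ℕ)
    (μs : ℕ → Measure (EuclideanSpace ℝ (Fin (n+1))))
    (μ : Measure (EuclideanSpace ℝ (Fin (n+1))))
    [∀ i, IsFiniteMeasure (μs i)] [IsFiniteMeasure μ]
    (hconv : ∀ f : EuclideanSpace ℝ (Fin (n+1)) →ᵇ ℝ,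
      Filter.Tendsto (fun i => ∫ x, f x ∂(μs i)) Filter.atTop (nhds (∫ x, f x ∂μ))) :
    measureEntropy n μ ≤ Filter.liminf (fun i => measureEntropy n (μs i)) Filter.atTop := by
  rw [measureEntropy]
  refine iSup_le fun y => iSup_le fun t => iSup_le fun ht => ?_
  set f := entropyKernel n y t ht with hf
  have hf0 : ∀ x, 0 ≤ f x := by
    intro x
    show (0:ℝ) ≤ (4 * Real.pi * t) ^ (-(n : ℝ) / 2) * Real.exp (-‖x - y‖ ^ 2 / (4 * t))
    have hb : (0:ℝ) < 4 * Real.pi * t := by positivity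
    positivity
  have key : ∀ (ν : Measure (EuclideanSpace ℝ (Fin (n+1)))) [IsFiniteMeasure ν],
      ∫⁻ x, ENNReal.ofReal
        ((4 * Real.pi * t) ^ (-(n : ℝ) / 2) * Real.exp (-‖x - y‖ ^ 2 / (4 * t))) ∂ν
      = ENNReal.ofReal (∫ x, f x ∂ν) := by
    intro ν _
    rw [MeasureTheory.ofReal_integral_eq_lintegral_ofReal (f.integrable ν)
      (Filter.Eventually.of_forall hf0)]
    rfl
  rw [key μ]
  have htend : Filter.Tendsto (fun i => ENNReal.ofReal (∫ x, f x ∂(μs i))) Filter.atTop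
      (nhds (ENNReal.ofReal (∫ x, f x ∂μ))) :=
    (ENNReal.continuous_ofReal.tendsto _).comp (hconv f)
  rw [← htend.liminf_eq]
  refine Filter.liminf_le_liminf (Filter.Eventually.of_forall fun i => ?_)
  rw [← key (μs i)]
  exact le_iSup_of_le y (le_iSup_of_le t (le_iSup_of_le ht le_rfl))
end

section
/- For every C > 0 and γ ∈ (0,1) there exists C' = C'(C, γ) > 0 with the following property. Let t₀ > 0 and let K(t), for t ∈ (0, t₀), be nonempty compact subsets of ℝ^{n+1} such that for every t ∈ (0, t₀) and every τ with 0 < τ < γ·min(t, t₀ − t), both K(t + τ) and K(t − τ) are contained in the closed C√τ-neighborhood of K(t). Then for all t₁, t₂ with 0 < t₁ < t₂ < t₀ one has dist_H(K(t₁), K(t₂)) ≤ C'·√(t₂ − t₁). -/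
/-!
Split `[t₁, t₂]` at its midpoint `t₁ + h`; the reflection `t ↦ t₀ - t` preserves the
hypothesis, so it suffices to bound the distance from `K t₁` to `K (t₁ + h)`. Walk from `t₁ + h`
down to `t₁` through the points `t₁ + h q^(2k)`: consecutive points are `τ = h (1 - q²) q^(2k)`
apart, which lies in the admissible window `γ · min t (t₀ - t)` as soon as `(1 + γ) q² ≥ 1`, and
costs `C √τ`, a geometric series in `q`. Once `h q^(2N) < γ t₁`, one more admissible step lands
exactly on `t₁`, at cost at most `C √h`.
-/

open Metric Set

theorem hausdorffEDist_le_sum_range {E : Type*} [PseudoEMetricSpace E] (S : ℕ → Set E) (N : ℕ) :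
    hausdorffEDist (S N) (S 0) ≤ ∑ k ∈ Finset.range N, hausdorffEDist (S (k + 1)) (S k) := by
  induction N with
  | zero => simp [hausdorffEDist_self]
  | succ N ih =>
    rw [Finset.sum_range_succ]
    exact hausdorffEDist_triangle.trans ((add_le_add le_rfl ih).trans_eq (add_comm _ _))

theorem hausdorffEDist_le_of_le_geometric {E : Type*} [PseudoEMetricSpace E] {S : ℕ → Set E}
    {c r : ℝ} (hc : 0 ≤ c) (hr0 : 0 ≤ r) (hr1 : r < 1)
    (hS : ∀ k, hausdorffEDist (S (k + 1)) (S k) ≤ ENNReal.ofReal (c * r ^ k)) (N : ℕ) :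
    hausdorffEDist (S N) (S 0) ≤ ENNReal.ofReal (c / (1 - r)) := by
  have hgeom : ∑ k ∈ Finset.range N, r ^ k ≤ 1 / (1 - r) := by
    simpa using geom_sum_Ico_le_of_lt_one (m := 0) (n := N) hr0 hr1
  calc hausdorffEDist (S N) (S 0)
      ≤ ∑ k ∈ Finset.range N, hausdorffEDist (S (k + 1)) (S k) := hausdorffEDist_le_sum_range S N
    _ ≤ ∑ k ∈ Finset.range N, ENNReal.ofReal (c * r ^ k) := Finset.sum_le_sum fun k _ => hS k
    _ = ENNReal.ofReal (c * ∑ k ∈ Finset.range N, r ^ k) := by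
      rw [Finset.mul_sum, ENNReal.ofReal_sum_of_nonneg fun k _ => by positivity]
    _ ≤ ENNReal.ofReal (c / (1 - r)) := by
      rw [← mul_one_div]
      gcongr

theorem exists_pos_lt_one_one_sub_sq_le {γ : ℝ} (hγ : 0 < γ) :
    ∃ q : ℝ, 0 < q ∧ q < 1 ∧ 1 - q ^ 2 ≤ γ * q ^ 2 := by
  -- `(1 + γ) q² ≥ 1` since `(2 + γ)² = 4 (1 + γ) + γ²`
  refine ⟨(2 + γ) / (2 + 2 * γ), by positivity, (div_lt_one (by positivity)).2 (by linarith), ?_⟩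
  rw [div_pow, ← sub_nonneg]
  field_simp
  nlinarith [sq_nonneg γ]

theorem hausdorffEDist_le_of_subset_cthickening {E : Type*} [PseudoEMetricSpace E]
    {A B : Set E} {r : ℝ} (hA : A ⊆ cthickening r B) (hB : B ⊆ cthickening r A) :
    hausdorffEDist A B ≤ ENNReal.ofReal r :=
  hausdorffEDist_le_of_infEDist (fun _ hx => mem_cthickening_iff.1 (hA hx))
    (fun _ hx => mem_cthickening_iff.1 (hB hx))

def LocallySqrtHolder {E : Type*} [PseudoEMetricSpace E] (K : ℝ → Set E) (C γ t₀ : ℝ) : Prop :=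
  ∀ t ∈ Ioo (0 : ℝ) t₀, ∀ τ : ℝ, 0 < τ → τ < γ * min t (t₀ - t) →
    K (t + τ) ⊆ cthickening (C * √τ) (K t) ∧ K (t - τ) ⊆ cthickening (C * √τ) (K t)

namespace LocallySqrtHolder

variable {E : Type*} [PseudoEMetricSpace E] {K : ℝ → Set E} {C γ t₀ : ℝ}

theorem comp_sub (hK : LocallySqrtHolder K C γ t₀) :
    LocallySqrtHolder (fun t => K (t₀ - t)) C γ t₀ := by
  intro t ht τ hτ hτt
  have ht' : t₀ - t ∈ Ioo 0 t₀ := ⟨by linarith [ht.2], by linarith [ht.1]⟩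
  have hτt' : τ < γ * min (t₀ - t) (t₀ - (t₀ - t)) := by rwa [sub_sub_cancel, min_comm]
  obtain ⟨hforward, hbackward⟩ := hK _ ht' τ hτ hτt'
  refine ⟨?_, ?_⟩
  · simpa only [sub_add_eq_sub_sub] using hbackward
  · simpa only [sub_sub_eq_add_sub, add_sub_right_comm] using hforward

theorem hausdorffEDist_le (hK : LocallySqrtHolder K C γ t₀) (hγ : 0 < γ) {s τ : ℝ}
    (hτ : 0 < τ) (hs : τ < γ * s) (hs' : τ < γ * (t₀ - (s + τ))) :
    hausdorffEDist (K s) (K (s + τ)) ≤ ENNReal.ofReal (C * √τ) := by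
  have window : ∀ u, s ≤ u → u ≤ s + τ → τ < γ * min u (t₀ - u) := fun u h₁ h₂ => by
    rw [mul_min_of_nonneg _ _ hγ.le]
    exact lt_min (by nlinarith) (by nlinarith)
  have mem : ∀ u, s ≤ u → u ≤ s + τ → u ∈ Ioo 0 t₀ := fun u h₁ h₂ =>
    ⟨by nlinarith, by nlinarith⟩
  have hback := (hK (s + τ) (mem _ (by linarith) le_rfl) τ hτ (window _ (by linarith) le_rfl)).2
  rw [add_sub_cancel_right] at hback
  exact hausdorffEDist_le_of_subset_cthickening hback
    (hK s (mem s le_rfl (by linarith)) τ hτ (window s le_rfl (by linarith))).1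

theorem hausdorffEDist_le_of_mul_sq (hK : LocallySqrtHolder K C γ t₀) (hγ : 0 < γ)
    {q : ℝ} (hq0 : 0 < q) (hq1 : q < 1) (hqγ : 1 - q ^ 2 ≤ γ * q ^ 2)
    {a h : ℝ} (ha : 0 < a) (hh : 0 < h) (hat₀ : a + 2 * h < t₀) {x : ℝ} (hx0 : 0 < x)
    (hx1 : x ≤ 1) :
    hausdorffEDist (K (a + h * (q * x) ^ 2)) (K (a + h * x ^ 2)) ≤
      ENNReal.ofReal (C * √(h * (1 - q ^ 2)) * x) := by
  have hq2 : q ^ 2 ≤ 1 := by nlinarith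
  have hδ : 0 ≤ h * (1 - q ^ 2) := mul_nonneg hh.le (by linarith)
  have hτ : 0 < h * (1 - q ^ 2) * x ^ 2 := mul_pos (mul_pos hh (by nlinarith)) (by positivity)
  have hτγ : h * (1 - q ^ 2) * x ^ 2 ≤ γ * (h * (q * x) ^ 2) := by
    have := mul_le_mul_of_nonneg_left hqγ (by positivity : 0 ≤ h * x ^ 2)
    linarith
  have hx2 : h * x ^ 2 ≤ h := mul_le_of_le_one_right hh.le (pow_le_one₀ hx0.le hx1)
  have hqx2 : γ * (h * (q * x) ^ 2) ≤ γ * h := by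
    gcongr
    exact mul_le_of_le_one_right hh.le (by rw [mul_pow]; nlinarith)
  have hsum : a + h * (q * x) ^ 2 + h * (1 - q ^ 2) * x ^ 2 = a + h * x ^ 2 := by ring
  convert hK.hausdorffEDist_le (s := a + h * (q * x) ^ 2) hγ hτ (by nlinarith) ?_ using 2
  · rw [hsum]
  · rw [Real.sqrt_mul hδ, Real.sqrt_sq hx0.le, mul_assoc]
  · rw [hsum]
    nlinarith

theorem hausdorffEDist_le_of_add_two_mul_lt (hK : LocallySqrtHolder K C γ t₀) (hγ : 0 < γ)
    (hC : 0 ≤ C) {q : ℝ} (hq0 : 0 < q) (hq1 : q < 1) (hqγ : 1 - q ^ 2 ≤ γ * q ^ 2)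
    {a h : ℝ} (ha : 0 < a) (hh : 0 < h) (hat₀ : a + 2 * h < t₀) :
    hausdorffEDist (K a) (K (a + h)) ≤ ENNReal.ofReal (C * (1 + √(1 - q ^ 2) / (1 - q)) * √h) := by
  have hqk : ∀ k, 0 < q ^ k ∧ q ^ k ≤ 1 := fun k => ⟨pow_pos hq0 k, pow_le_one₀ hq0.le hq1.le⟩
  obtain ⟨N, hN⟩ := exists_pow_lt_of_lt_one (div_pos (mul_pos hγ (lt_min ha hh)) hh) hq1
  have chain := hausdorffEDist_le_of_le_geometric (S := fun k => K (a + h * (q ^ k) ^ 2))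
    (c := C * √(h * (1 - q ^ 2))) (by positivity) hq0.le hq1
    (fun k => by
      rw [pow_succ' q k]
      exact hK.hausdorffEDist_le_of_mul_sq hγ hq0 hq1 hqγ ha hh hat₀ (hqk k).1 (hqk k).2) N
  simp only [pow_zero, one_pow, mul_one] at chain
  set ε := h * (q ^ N) ^ 2
  have hε : ε < γ * min a h := by
    obtain ⟨hN0, hN1⟩ := hqk N
    have hsq : h * (q ^ N) ^ 2 ≤ h * q ^ N := by gcongr; nlinarith
    rw [lt_div_iff₀ hh] at hN
    linarith
  have hεh : ε ≤ h := mul_le_of_le_one_right hh.le (pow_le_one₀ (hqk N).1.le (hqk N).2)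
  have jump : hausdorffEDist (K a) (K (a + ε)) ≤ ENNReal.ofReal (C * √h) := by
    refine (hK.hausdorffEDist_le hγ (by positivity) ?_ ?_).trans ?_
    · exact hε.trans_le (by gcongr; exact min_le_left _ _)
    · exact hε.trans_le (by gcongr; linarith [min_le_right a h])
    · gcongr
  calc hausdorffEDist (K a) (K (a + h))
      ≤ hausdorffEDist (K a) (K (a + ε)) + hausdorffEDist (K (a + ε)) (K (a + h)) :=
        hausdorffEDist_triangle
    _ ≤ ENNReal.ofReal (C * √h) + ENNReal.ofReal (C * √(h * (1 - q ^ 2)) / (1 - q)) :=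
        add_le_add jump chain
    _ = ENNReal.ofReal (C * (1 + √(1 - q ^ 2) / (1 - q)) * √h) := by
        rw [← ENNReal.ofReal_add (by positivity) (div_nonneg (by positivity) (by linarith)),
          Real.sqrt_mul hh.le]
        congr 1
        ring

end LocallySqrtHolder

/-- Iterating the two-sided clearing-out estimate: if each time slice `K t` moves by at most
`C√τ` in Hausdorff distance over (relatively small) time increments `τ`, both forward and
backward in time, then the Hausdorff distance between any two slices is bounded by
`C'·√(t₂ - t₁)`. -/
theorem hausdorffDist_le_sqrt_time (n : ℕ) (C : ℝ) (hC : 0 < C)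
    (γ : ℝ) (hγ : γ ∈ Set.Ioo (0 : ℝ) 1) :
    ∃ C' : ℝ, 0 < C' ∧
      ∀ t₀ : ℝ, 0 < t₀ →
      ∀ K : ℝ → Set (EuclideanSpace ℝ (Fin (n+1))),
        (∀ t ∈ Set.Ioo (0 : ℝ) t₀, (K t).Nonempty ∧ IsCompact (K t)) →
        (∀ t ∈ Set.Ioo (0 : ℝ) t₀, ∀ τ : ℝ, 0 < τ → τ < γ * min t (t₀ - t) →
          K (t + τ) ⊆ cthickening (C * Real.sqrt τ) (K t) ∧
          K (t - τ) ⊆ cthickening (C * Real.sqrt τ) (K t)) →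
        ∀ t₁ t₂ : ℝ, 0 < t₁ → t₁ < t₂ → t₂ < t₀ →
          hausdorffDist (K t₁) (K t₂) ≤ C' * Real.sqrt (t₂ - t₁) := by
  have hγ0 := hγ.1
  obtain ⟨q, hq0, hq1, hqγ⟩ := exists_pos_lt_one_one_sub_sq_le hγ0
  set B := 1 + √(1 - q ^ 2) / (1 - q)
  have hB : 0 < B := by have := sub_pos.2 hq1; positivity
  refine ⟨2 * (C * B), by positivity, ?_⟩
  intro t₀ _ K _ hK t₁ t₂ ht₁ h₁₂ ht₂
  set h := (t₂ - t₁) / 2 with hh_def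
  have hh : 0 < h := half_pos (sub_pos.2 h₁₂)
  have left : hausdorffEDist (K t₁) (K (t₁ + h)) ≤ ENNReal.ofReal (C * B * √h) :=
    LocallySqrtHolder.hausdorffEDist_le_of_add_two_mul_lt hK hγ0 hC.le hq0 hq1 hqγ ht₁ hh
      (by linarith)
  have right : hausdorffEDist (K t₂) (K (t₁ + h)) ≤ ENNReal.ofReal (C * B * √h) := by
    have := (LocallySqrtHolder.comp_sub hK).hausdorffEDist_le_of_add_two_mul_lt hγ0 hC.le hq0
      hq1 hqγ (a := t₀ - t₂) (sub_pos.2 ht₂) hh (by linarith)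
    rwa [sub_sub_cancel, show t₀ - (t₀ - t₂ + h) = t₁ + h by linarith] at this
  have total : hausdorffEDist (K t₁) (K t₂) ≤ ENNReal.ofReal (2 * (C * B) * √h) :=
    calc hausdorffEDist (K t₁) (K t₂)
        ≤ hausdorffEDist (K t₁) (K (t₁ + h)) + hausdorffEDist (K (t₁ + h)) (K t₂) :=
          hausdorffEDist_triangle
      _ ≤ ENNReal.ofReal (C * B * √h) + ENNReal.ofReal (C * B * √h) :=
          add_le_add left (hausdorffEDist_comm.trans_le right)
      _ = ENNReal.ofReal (2 * (C * B) * √h) := by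
          rw [← ENNReal.ofReal_add (by positivity) (by positivity)]
          ring_nf
  refine ENNReal.toReal_le_of_le_ofReal (by positivity) (total.trans ?_)
  gcongr
  linarith
end

section
/- Let n ≥ 1, let ε ∈ (0,1), and let Σ ⊂ ℝ^{n+1} be a nonempty compact set with diam(Σ) > 0 satisfying dist_H(Σ, ρ·Sⁿ + y) ≥ ρ·ε for every ρ > 0 and every y ∈ ℝ^{n+1}. If Σ' ⊂ ℝ^{n+1} is a nonempty compact set with dist_H(Σ, Σ') < min(diam(Σ)/16, ε·diam(Σ)/32), then dist_H(Σ', ρ·Sⁿ + y) ≥ ρ·ε/2 for every ρ > 0 and every y ∈ ℝ^{n+1}. -/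
open MeasureTheory Metric Set

lemma diam_le_diam_add_two_mul_hausdorffDist
    {α : Type*} [MetricSpace α] {A B : Set α} (hB : B.Nonempty)
    (hBb : Bornology.IsBounded B) (hfin : EMetric.hausdorffEdist A B ≠ ⊤) :
    diam A ≤ diam B + 2 * hausdorffDist A B := by
  refine le_of_forall_pos_le_add fun δ hδ => ?_
  have hd : hausdorffDist A B < hausdorffDist A B + δ / 2 := by linarith
  apply diam_le_of_forall_dist_le
  · have := hausdorffDist_nonneg (s := A) (t := B)
    have := diam_nonneg (s := B)
    linarith
  · intro x hx y hy
    obtain ⟨x', hx', hxx'⟩ := exists_dist_lt_of_hausdorffDist_lt hx hd hfin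
    obtain ⟨y', hy', hyy'⟩ := exists_dist_lt_of_hausdorffDist_lt hy hd hfin
    have h1 : dist x' y' ≤ diam B := dist_le_diam_of_mem hBb hx' hy'
    calc dist x y ≤ dist x x' + dist x' y' + dist y' y := dist_triangle4 _ _ _ _
    _ ≤ (hausdorffDist A B + δ/2) + diam B + (hausdorffDist A B + δ/2) := by
        rw [dist_comm y' y]; linarith
    _ = diam B + 2 * hausdorffDist A B + δ := by ring

/-- "Triangle" inequality for the scale-invariant Hausdorff distance to round spheres:
if `S` is at scale-invariant Hausdorff distance at least `ε` from every round sphere, then any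
sufficiently small perturbation `S'` of `S` is at scale-invariant Hausdorff distance at least
`ε/2` from every round sphere. -/
theorem perturbation_far_from_spheres (n : ℕ) (hn : 1 ≤ n)
    (ε : ℝ) (hε : ε ∈ Set.Ioo (0 : ℝ) 1)
    (S : Set (EuclideanSpace ℝ (Fin (n+1)))) (hSne : S.Nonempty) (hScpt : IsCompact S)
    (hdiam : 0 < diam S)
    (hfar : ∀ ρ : ℝ, 0 < ρ → ∀ y : EuclideanSpace ℝ (Fin (n+1)),
      ρ * ε ≤ hausdorffDist S
        ((fun x => ρ • x + y) '' sphere (0 : EuclideanSpace ℝ (Fin (n+1))) 1))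
    (S' : Set (EuclideanSpace ℝ (Fin (n+1)))) (hS'ne : S'.Nonempty) (hS'cpt : IsCompact S')
    (hclose : hausdorffDist S S' < min (diam S / 16) (ε * diam S / 32)) :
    ∀ ρ : ℝ, 0 < ρ → ∀ y : EuclideanSpace ℝ (Fin (n+1)),
      ρ * ε / 2 ≤ hausdorffDist S'
        ((fun x => ρ • x + y) '' sphere (0 : EuclideanSpace ℝ (Fin (n+1))) 1) := by
  obtain ⟨hε0, hε1⟩ := hε
  intro ρ hρ y
  set sph := (fun x => ρ • x + y) '' sphere (0 : EuclideanSpace ℝ (Fin (n+1))) 1 with hsph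
  have hsphne : sph.Nonempty := by
    refine Set.Nonempty.image _ ?_
    exact NormedSpace.sphere_nonempty.2 zero_le_one
  have hsphsub : sph ⊆ closedBall y ρ := by
    rintro _ ⟨x, hx, rfl⟩
    simp only [mem_sphere_iff_norm, sub_zero] at hx
    simp [mem_closedBall, dist_eq_norm, norm_smul, hx, abs_of_pos hρ]
  have hsphb : Bornology.IsBounded sph := (isBounded_closedBall).subset hsphsub
  have hsphdiam : diam sph ≤ 2 * ρ := by
    calc diam sph ≤ diam (closedBall y ρ) := diam_mono hsphsub isBounded_closedBall
    _ ≤ 2 * ρ := diam_closedBall hρ.le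
  have hSb := hScpt.isBounded
  have hS'b := hS'cpt.isBounded
  have finSS' : EMetric.hausdorffEdist S S' ≠ ⊤ :=
    hausdorffEdist_ne_top_of_nonempty_of_bounded hSne hS'ne hSb hS'b
  have finS'sph : EMetric.hausdorffEdist S' sph ≠ ⊤ :=
    hausdorffEdist_ne_top_of_nonempty_of_bounded hS'ne hsphne hS'b hsphb
  set d := hausdorffDist S S' with hd
  have hd0 : 0 ≤ d := hausdorffDist_nonneg
  have hd1 : d < diam S / 16 := lt_of_lt_of_le hclose (min_le_left _ _)
  have hd2 : d < ε * diam S / 32 := lt_of_lt_of_le hclose (min_le_right _ _)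
  by_cases hcase : d ≤ ρ * ε / 2
  · have htri : hausdorffDist S sph ≤ d + hausdorffDist S' sph :=
      hausdorffDist_triangle finSS'
    have := hfar ρ hρ y
    rw [← hsph] at this
    linarith
  · push_neg at hcase
    -- ρ small: ρ * ε / 2 < d < ε * diam S / 32, so ρ < diam S / 16
    have hρsmall : ρ < diam S / 16 := by
      have h : ρ * ε < (diam S / 16) * ε := by linarith
      exact lt_of_mul_lt_mul_right h hε0.le
    have hdiamS' : diam S ≤ diam S' + 2 * d :=
      diam_le_diam_add_two_mul_hausdorffDist hS'ne hS'b finSS'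
    have hdiamS'2 : diam S' ≤ diam sph + 2 * hausdorffDist S' sph :=
      diam_le_diam_add_two_mul_hausdorffDist hsphne hsphb finS'sph
    have : ρ * ε / 2 < ε * diam S / 32 := by linarith
    have hub : ρ * ε / 2 < diam S / 32 := by nlinarith
    nlinarith [hausdorffDist_nonneg (s := S') (t := sph)]
end
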